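/- arXiv:1511.07532 — 4 statements merged into one kernel-verified Lean document; each statement's English description precedes it below -/
import Mathlib

section
/- The real number 0.46891012141516182021222425..., whose decimal expansion is obtained by concatenating the base-10 digits of the composite positive integers in increasing order, is not simply strongly normal to the base 10 (and hence not strongly normal to the base 10). -/
open Filter

/-- The `i`-th digit (starting from `i = 0`) of the base-`b` expansion of the real `ξ`. -/
noncomputable def digitOf (b : ℕ) (ξ : ℝ) (i : ℕ) : ℕ :=
  (⌊ξ * (b : ℝ) ^ (i + 1)⌋).toNat % b

/-- `m_{k,b}(ξ; n)`: the number of occurrences of the digit `k` among the first `n`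
base-`b` digits of `ξ`. -/
noncomputable def digCount (b : ℕ) (ξ : ℝ) (k n : ℕ) : ℕ :=
  ((Finset.range n).filter fun i => digitOf b ξ i = k).card

/-- The ratio appearing in the definition of (simple) strong normality. -/
noncomputable def snRatio (b : ℕ) (ξ : ℝ) (k n : ℕ) : ℝ :=
  ((digCount b ξ k n : ℝ) - (n : ℝ) / b) / Real.sqrt (2 * n * Real.log (Real.log n))

/-- `ξ` is simply strongly normal to base `b`. -/
def SimplyStronglyNormal (b : ℕ) (ξ : ℝ) : Prop :=
  ∀ k < b,
    Filter.atTop.limsup (fun n : ℕ => (snRatio b ξ k n : EReal))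
        = ((Real.sqrt ((b : ℝ) - 1) / b : ℝ) : EReal) ∧
    Filter.atTop.liminf (fun n : ℕ => (snRatio b ξ k n : EReal))
        = ((-(Real.sqrt ((b : ℝ) - 1) / b) : ℝ) : EReal)

/-- `ξ` is strongly normal to base `b`: simply strongly normal to base `b^m` for all `m ≥ 1`. -/
def StronglyNormal (b : ℕ) (ξ : ℝ) : Prop :=
  ∀ m : ℕ, 1 ≤ m → SimplyStronglyNormal (b ^ m) ξ

/-- `ℓ_b(n)`: the number of base-`b` digits of `n`. -/
def lenb (b n : ℕ) : ℕ := (Nat.digits b n).length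

/-- The base-`b` digit string (most significant digit first) of `a`,
repeated `⌊c ^ ℓ_b(a)⌋` times. -/
noncomputable def block (b : ℕ) (c : ℝ) (a : ℕ) : List ℕ :=
  (List.replicate ⌊c ^ lenb b a⌋₊ (Nat.digits b a).reverse).flatten

/-- The concatenation of the blocks of the first `N` elements of `B` (in increasing order). -/
noncomputable def prefixDigits (b : ℕ) (c : ℝ) (B : Set ℕ) (N : ℕ) : List ℕ :=
  ((List.range N).map fun n => block b c (Nat.nth (· ∈ B) n)).flatten

/-- The `i`-th digit of the infinite concatenation of the blocks of the elements of `B`. -/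
noncomputable def xiDigit (b : ℕ) (c : ℝ) (B : Set ℕ) (i : ℕ) : ℕ :=
  (prefixDigits b c B (i + 1)).getD i 0

/-- `ξ_{B,b,c}`: the real number whose base-`b` expansion is the concatenation, over the
elements `a` of `B` in increasing order, of the base-`b` digits of `a` repeated
`⌊c ^ ℓ_b(a)⌋` times. -/
noncomputable def xiReal (b : ℕ) (c : ℝ) (B : Set ℕ) : ℝ :=
  ∑' i : ℕ, (xiDigit b c B i : ℝ) / (b : ℝ) ^ (i + 1)

/-- `A(x)`: the number of elements of `A` that are at most `x`. -/
noncomputable def countA (A : Set ℕ) (x : ℕ) : ℕ := Set.ncard {n ∈ A | n ≤ x}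

/-- `d_{b,c,k}`: the total number of base-`b` digits in the concatenation, for
`n = 1, …, 2·b^(k-1) − 1`, of the base-`b` digit string of `n` repeated `⌊c^{ℓ_b(n)}⌋` times. -/
noncomputable def dTotal (b : ℕ) (c : ℝ) (k : ℕ) : ℕ :=
  ∑ n ∈ Finset.Icc 1 (2 * b ^ (k - 1) - 1), ⌊c ^ lenb b n⌋₊ * lenb b n

/-- The closed formula for `d_{b,c,k}`. -/
noncomputable def dFormula (b : ℕ) (c : ℝ) (k : ℕ) : ℕ :=
  ⌊c ^ k⌋₊ * k * b ^ (k - 1) +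
    ∑ n ∈ Finset.Icc 1 (k - 1), ⌊c ^ n⌋₊ * n * b ^ (n - 1) * (b - 1)

/-!
Among the composites in `[10^K, 2·10^K)`, all of which have `K + 1` digits with leading digit
`1`, the digit `0` fills each of the `K` lower positions of at most a tenth of the numbers.
By Chebyshev's argument (the primes of `(n, 2n]` divide `C(2n, n) ≤ 4^n`) all but
`O(10^K / K)` of these numbers are composite, so in the corresponding stretch of the expansion
the digit `0` is about `10^(K-1)` occurrences short of a tenth of the stretch. This deficit is
linear in the position, whereas simple strong normality only allows deviations of order
`√(2 n log log n)`.
-/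

open Finset

namespace Real

variable {b : ℕ}

lemma pow_mul_sum_ofDigitsTerm_succ [NeZero b] (a : ℕ → Fin b) (n : ℕ) :
    (b : ℝ) ^ (n + 1) * ∑ i ∈ range (n + 1), ofDigitsTerm a i
      = b * ((b : ℝ) ^ n * ∑ i ∈ range n, ofDigitsTerm a i) + (a n : ℕ) := by
  have : (b : ℝ) ≠ 0 := Nat.cast_ne_zero.2 (NeZero.ne b)
  rw [sum_range_succ, ofDigitsTerm]
  field_simp
  ring

lemma exists_natCast_eq_pow_mul_sum_ofDigitsTerm [NeZero b] (a : ℕ → Fin b) (n : ℕ) :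
    ∃ m : ℕ, (b : ℝ) ^ n * ∑ i ∈ range n, ofDigitsTerm a i = m := by
  induction n with
  | zero => exact ⟨0, by simp⟩
  | succ n ih =>
    obtain ⟨m, hm⟩ := ih
    exact ⟨b * m + a n, by rw [pow_mul_sum_ofDigitsTerm_succ, hm]; push_cast; rfl⟩

lemma ofDigits_lt_one {a : ℕ → Fin b} {j : ℕ} (hj : (a j : ℕ) + 1 < b) : ofDigits a < 1 := by
  rw [← ofDigits_const_last_eq_one' (show 1 < b by omega)]
  refine Summable.tsum_lt_tsum (i := j) (fun i => ?_) ?_ summable_ofDigitsTerm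
    summable_ofDigitsTerm
  all_goals
    simp only [ofDigitsTerm]
    gcongr
  · exact Nat.le_sub_one_of_lt (a i).isLt
  · exact inv_pos.2 (pow_pos (Nat.cast_pos.2 (by omega)) _)
  · omega

lemma digits_ofDigits [NeZero b] {a : ℕ → Fin b} (ha : ∀ N, ∃ j, N ≤ j ∧ (a j : ℕ) + 1 < b) :
    digits (ofDigits a) b = a := by
  funext i
  obtain ⟨m, hm⟩ := exists_natCast_eq_pow_mul_sum_ofDigitsTerm a i
  obtain ⟨j, hij, hj⟩ := ha (i + 1)
  set t := ofDigits fun k => a (k + (i + 1))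
  have ht : t < 1 := ofDigits_lt_one (j := j - (i + 1)) (by simpa [Nat.sub_add_cancel hij])
  have hsplit : ofDigits a * b ^ (i + 1) = t + (b * m + a i : ℕ) := by
    have : (b : ℝ) ≠ 0 := Nat.cast_ne_zero.2 (NeZero.ne b)
    rw [ofDigits_eq_sum_add_ofDigits a (i + 1), add_mul, mul_comm (∑ _ ∈ _, _),
      pow_mul_sum_ofDigitsTerm_succ, hm]
    field_simp
    push_cast
    ring
  have hfloor : ⌊ofDigits a * b ^ (i + 1)⌋₊ = b * m + a i := by
    rw [hsplit, Nat.floor_add_natCast (ofDigits_nonneg _), Nat.floor_eq_zero.2 ht, zero_add]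
  ext
  rw [digits, hfloor, Fin.val_ofNat, Nat.mul_add_mod, Nat.mod_eq_of_lt (a i).isLt]

end Real

lemma digitOf_eq_digits (b : ℕ) [NeZero b] (ξ : ℝ) (i : ℕ) :
    digitOf b ξ i = Real.digits ξ b i := by
  rw [digitOf, Int.floor_toNat, Real.digits, Fin.val_ofNat]

lemma digitOf_tsum_div_pow {b : ℕ} {d : ℕ → ℕ} (hd : ∀ i, d i < b)
    (hd' : ∀ N, ∃ j, N ≤ j ∧ d j + 1 < b) (i : ℕ) :
    digitOf b (∑' j, (d j : ℝ) / b ^ (j + 1)) i = d i := by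
  have : NeZero b := ⟨(hd 0).ne_bot⟩
  have hsum : ∑' j, (d j : ℝ) / b ^ (j + 1) = Real.ofDigits fun j => ⟨d j, hd j⟩ := by
    simp [Real.ofDigits, Real.ofDigitsTerm, div_eq_mul_inv]
  rw [hsum, digitOf_eq_digits, Real.digits_ofDigits hd']

lemma List.count_eq_card_filter_range_getD {α : Type*} [DecidableEq α] (l : List α) (a d : α) :
    l.count a = #{i ∈ Finset.range l.length | l.getD i d = a} := by
  induction l with
  | nil => simp
  | cons x l ih =>
    simp only [List.count_cons, ih, List.length_cons, card_filter, Finset.sum_range_succ',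
      List.getD_cons_succ, List.getD_cons_zero, beq_iff_eq]

lemma Nat.sum_range_count_nth {M : Type*} [AddCommMonoid M] (p : ℕ → Prop) [DecidablePred p]
    (f : ℕ → M) (n : ℕ) :
    ∑ i ∈ range (Nat.count p n), f (Nat.nth p i) = ∑ a ∈ range n with p a, f a := by
  induction n with
  | zero => simp
  | succ n ih =>
    rw [range_add_one, filter_insert, Nat.count_succ]
    by_cases hn : p n
    · rw [if_pos hn, if_pos hn, sum_range_succ, ih, Nat.nth_count hn, sum_insert (by simp),
        add_comm]
    · rw [if_neg hn, if_neg hn, add_zero, ih]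

section Concatenation

variable {b : ℕ} {c : ℝ} {B : Set ℕ}

lemma prefixDigits_succ (N : ℕ) :
    prefixDigits b c B (N + 1) = prefixDigits b c B N ++ block b c (Nat.nth (· ∈ B) N) := by
  simp [prefixDigits, List.range_succ]

lemma prefixDigits_isPrefix {M N : ℕ} (h : M ≤ N) :
    prefixDigits b c B M <+: prefixDigits b c B N := by
  induction N, h using Nat.le_induction with
  | base => exact List.prefix_rfl
  | succ N _ ih => exact ih.trans (prefixDigits_succ N ▸ List.prefix_append _ _)

lemma block_one (a : ℕ) : block b 1 a = (Nat.digits b a).reverse := by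
  simp [block]

lemma length_prefixDigits_one (N : ℕ) :
    (prefixDigits b 1 B N).length = ∑ n ∈ range N, lenb b (Nat.nth (· ∈ B) n) := by
  induction N with
  | zero => simp [prefixDigits]
  | succ N ih => simp [prefixDigits_succ, block_one, ih, sum_range_succ, lenb]

lemma count_prefixDigits_one (k N : ℕ) :
    (prefixDigits b 1 B N).count k
      = ∑ n ∈ range N, (Nat.digits b (Nat.nth (· ∈ B) n)).count k := by
  induction N with
  | zero => simp [prefixDigits]
  | succ N ih => simp [prefixDigits_succ, block_one, ih, sum_range_succ]

lemma le_length_prefixDigits_one (hB : B.Infinite) (h0 : 0 ∉ B) (N : ℕ) :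
    N ≤ (prefixDigits b 1 B N).length := by
  rw [length_prefixDigits_one]
  simpa using card_nsmul_le_sum (range N) (fun n => lenb b (Nat.nth (· ∈ B) n)) 1 fun n _ =>
    List.length_pos_iff.2 <| Nat.digits_ne_nil_iff_ne_zero.2 <|
      ne_of_mem_of_not_mem (Nat.nth_mem_of_infinite hB n) h0

lemma xiDigit_eq_getD (hB : B.Infinite) (h0 : 0 ∉ B) {i N : ℕ}
    (hi : i < (prefixDigits b 1 B N).length) :
    xiDigit b 1 B i = (prefixDigits b 1 B N).getD i 0 := by
  have hi' : i < (prefixDigits b 1 B (i + 1)).length := le_length_prefixDigits_one hB h0 _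
  rw [xiDigit, List.getD_eq_getElem _ _ hi', List.getD_eq_getElem _ _ hi]
  rcases le_total (i + 1) N with h | h
  · exact (prefixDigits_isPrefix h).getElem hi'
  · exact ((prefixDigits_isPrefix h).getElem hi).symm

lemma xiDigit_lt (hb : 2 ≤ b) (i : ℕ) : xiDigit b 1 B i < b := by
  rw [xiDigit]
  by_cases hi : i < (prefixDigits b 1 B (i + 1)).length
  · rw [List.getD_eq_getElem _ _ hi]
    obtain ⟨l, hl, hdigit⟩ := List.mem_flatten.1 (List.getElem_mem hi)
    obtain ⟨n, -, rfl⟩ := List.mem_map.1 hl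
    exact Nat.digits_lt_base hb (List.mem_reverse.1 (block_one (b := b) _ ▸ hdigit))
  · rw [List.getD_eq_default _ _ (not_lt.1 hi)]
    omega

lemma infinite_of_forall_exists_dvd (hmul : ∀ N, ∃ a ∈ B, N ≤ a ∧ b ∣ a) : B.Infinite :=
  Set.infinite_of_forall_exists_gt fun N => (hmul (N + 1)).imp fun _ ha => ⟨ha.1, ha.2.1⟩

/-- The last digit of a multiple of `b` in `B` is a `0` of the expansion. -/
lemma exists_xiDigit_eq_zero (hb : 2 ≤ b) (hmul : ∀ N, ∃ a ∈ B, N ≤ a ∧ b ∣ a) (h0 : 0 ∉ B)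
    (N : ℕ) : ∃ j, N ≤ j ∧ xiDigit b 1 B j = 0 := by
  classical
  have hB := infinite_of_forall_exists_dvd hmul
  obtain ⟨a, haB, hNa, hba⟩ := hmul (Nat.nth (· ∈ B) N)
  set n := Nat.count (· ∈ B) a
  have hn : Nat.nth (· ∈ B) n = a := Nat.nth_count haB
  have hNn : N ≤ n := (Nat.nth_le_nth hB).1 (hn ▸ hNa)
  have hlen : 0 < lenb b a :=
    List.length_pos_iff.2 (Nat.digits_ne_nil_iff_ne_zero.2 (ne_of_mem_of_not_mem haB h0))
  refine ⟨(prefixDigits b 1 B n).length + (lenb b a - 1),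
    (le_length_prefixDigits_one hB h0 n).trans' hNn |>.trans (Nat.le_add_right _ _), ?_⟩
  rw [xiDigit_eq_getD hB h0 (N := n + 1), prefixDigits_succ, block_one, hn,
    List.getD_append_right _ _ _ _ (Nat.le_add_right _ _), Nat.add_sub_cancel_left,
    List.getD_reverse _ (by simpa [lenb] using hlen)]
  · rw [show (Nat.digits b a).length - 1 - (lenb b a - 1) = 0 by simp [lenb],
      Nat.getD_digits _ _ hb, pow_zero, Nat.div_one, Nat.mod_eq_zero_of_dvd hba]
  · rw [prefixDigits_succ, block_one, hn, List.length_append, List.length_reverse]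
    exact Nat.add_lt_add_left (Nat.sub_one_lt hlen.ne') _

lemma digCount_xiReal_length_prefixDigits (hb : 2 ≤ b) (hmul : ∀ N, ∃ a ∈ B, N ≤ a ∧ b ∣ a)
    (h0 : 0 ∉ B) (k N : ℕ) :
    digCount b (xiReal b 1 B) k (prefixDigits b 1 B N).length
      = ∑ n ∈ range N, (Nat.digits b (Nat.nth (· ∈ B) n)).count k := by
  have hnonmax (N : ℕ) : ∃ j, N ≤ j ∧ xiDigit b 1 B j + 1 < b :=
    (exists_xiDigit_eq_zero hb hmul h0 N).imp fun _ hj => ⟨hj.1, by omega⟩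
  rw [← count_prefixDigits_one, List.count_eq_card_filter_range_getD _ k 0, digCount]
  refine congrArg card (filter_congr fun i hi => ?_)
  rw [xiReal, digitOf_tsum_div_pow (xiDigit_lt hb) hnonmax,
    xiDigit_eq_getD (infinite_of_forall_exists_dvd hmul) h0 (mem_range.1 hi)]

lemma digCount_xiReal_sum_lenb [DecidablePred (· ∈ B)] (hb : 2 ≤ b)
    (hmul : ∀ N, ∃ a ∈ B, N ≤ a ∧ b ∣ a) (h0 : 0 ∉ B) (k M : ℕ) :
    digCount b (xiReal b 1 B) k (∑ a ∈ range M with a ∈ B, lenb b a)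
      = ∑ a ∈ range M with a ∈ B, (Nat.digits b a).count k := by
  rw [← Nat.sum_range_count_nth, ← Nat.sum_range_count_nth, ← length_prefixDigits_one,
    digCount_xiReal_length_prefixDigits hb hmul h0]

end Concatenation

/-- The scale of the law of the iterated logarithm. -/
noncomputable def lilScale (n : ℕ) : ℝ := √(2 * n * Real.log (Real.log n))

lemma snRatio_eq (b : ℕ) (ξ : ℝ) (k n : ℕ) :
    snRatio b ξ k n = ((digCount b ξ k n : ℝ) - n / b) / lilScale n := rfl

lemma lilScale_pos {n : ℕ} (hn : 3 ≤ n) : 0 < lilScale n := by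
  have h3 : (3 : ℝ) ≤ n := by exact_mod_cast hn
  have hlog : 1 < Real.log n := by
    rw [Real.lt_log_iff_exp_lt (by linarith)]
    linarith [Real.exp_one_lt_d9]
  have := Real.log_pos hlog
  exact Real.sqrt_pos.2 (by positivity)

lemma log_log_le_two_mul_sqrt (n : ℕ) : Real.log (Real.log n) ≤ 2 * √n := by
  have := Real.log_le_rpow_div (Nat.cast_nonneg n) (by norm_num : (0 : ℝ) < 1 / 2)
  rw [Real.sqrt_eq_rpow]
  linarith [Real.log_le_self (Real.log_natCast_nonneg n)]

lemma lilScale_pow_four_le (n : ℕ) : lilScale n ^ 4 ≤ 16 * (n : ℝ) ^ 3 := by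
  have h : lilScale n ≤ √(4 * n * √n) := by
    refine Real.sqrt_le_sqrt ?_
    nlinarith [log_log_le_two_mul_sqrt n, (Nat.cast_nonneg n : (0 : ℝ) ≤ n)]
  calc lilScale n ^ 4 ≤ √(4 * n * √n) ^ 4 := pow_le_pow_left₀ (Real.sqrt_nonneg _) h 4
    _ = 16 * (n : ℝ) ^ 3 := by
      rw [show 4 = 2 * 2 from rfl, pow_mul, Real.sq_sqrt (by positivity), mul_pow,
        Real.sq_sqrt (Nat.cast_nonneg n)]
      ring

lemma cube_mul_le_ten_pow {J : ℕ} (hJ : 14 ≤ J) : 128 * (J + 2) ^ 3 * 10 ^ 7 ≤ 10 ^ J := by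
  induction J, hJ using Nat.le_induction with
  | base => norm_num
  | succ J _ ih =>
    calc 128 * (J + 1 + 2) ^ 3 * 10 ^ 7 ≤ 128 * (2 * (J + 2)) ^ 3 * 10 ^ 7 := by gcongr; omega
      _ = 8 * (128 * (J + 2) ^ 3 * 10 ^ 7) := by ring
      _ ≤ 10 ^ (J + 1) := by rw [pow_succ (10 : ℕ) J]; omega

lemma ten_mul_lilScale_le {K n : ℕ} (hK : 15 ≤ K) (hn : n ≤ 2 * (K + 1) * 10 ^ K) :
    10 * lilScale n ≤ 10 ^ (K - 1) := by
  obtain ⟨J, rfl⟩ : ∃ J, K = J + 1 := ⟨K - 1, by omega⟩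
  have hnat : 10 ^ 4 * 16 * n ^ 3 ≤ (10 ^ J) ^ 4 :=
    calc 10 ^ 4 * 16 * n ^ 3 ≤ 10 ^ 4 * 16 * (2 * (J + 2) * 10 ^ (J + 1)) ^ 3 := by gcongr
      _ = 128 * (J + 2) ^ 3 * 10 ^ 7 * 10 ^ (3 * J) := by ring
      _ ≤ 10 ^ J * 10 ^ (3 * J) := by gcongr; exact cube_mul_le_ten_pow (by omega)
      _ = (10 ^ J) ^ 4 := by ring
  have hreal : (10 * lilScale n) ^ 4 ≤ ((10 : ℝ) ^ J) ^ 4 := by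
    rw [mul_pow]
    calc (10 : ℝ) ^ 4 * lilScale n ^ 4 ≤ 10 ^ 4 * (16 * (n : ℝ) ^ 3) := by
          gcongr; exact lilScale_pow_four_le n
      _ ≤ ((10 : ℝ) ^ J) ^ 4 := by rw [← mul_assoc]; exact_mod_cast hnat
  exact le_of_pow_le_pow_left₀ (by norm_num) (by positivity) hreal

lemma SimplyStronglyNormal.eventually_abs_digCount_sub_lt {b k : ℕ} {ξ : ℝ}
    (h : SimplyStronglyNormal b ξ) (hk : k < b) :
    ∀ᶠ n in atTop, |(digCount b ξ k n : ℝ) - n / b| < lilScale n := by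
  obtain ⟨hsup, hinf⟩ := h k hk
  have hb : (0 : ℝ) < b := by exact_mod_cast k.zero_le.trans_lt hk
  have hc : √((b : ℝ) - 1) / b < 1 := by
    rw [div_lt_one hb, Real.sqrt_lt' hb]
    nlinarith
  have hup : ∀ᶠ n in atTop, (snRatio b ξ k n : EReal) < (1 : ℝ) :=
    eventually_lt_of_limsup_lt (hsup ▸ EReal.coe_lt_coe_iff.2 hc)
  have hlo : ∀ᶠ n in atTop, ((-1 : ℝ) : EReal) < snRatio b ξ k n :=
    eventually_lt_of_lt_liminf (hinf ▸ EReal.coe_lt_coe_iff.2 (neg_lt_neg hc))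
  filter_upwards [hup, hlo, eventually_ge_atTop 3] with n hup hlo hn
  have hE := lilScale_pos hn
  rw [EReal.coe_lt_coe_iff, snRatio_eq, div_lt_one hE] at hup
  rw [EReal.coe_lt_coe_iff, snRatio_eq, lt_div_iff₀ hE] at hlo
  exact abs_lt.2 ⟨by linarith, hup⟩

lemma not_simplyStronglyNormal_of_frequently_deficient {b k : ℕ} {ξ : ℝ} (hk : k < b)
    (h : ∀ N, ∃ n₁ n₂, N ≤ n₁ ∧ N ≤ n₂ ∧
      (b : ℝ) * ((digCount b ξ k n₂ : ℝ) - digCount b ξ k n₁) + b * (lilScale n₁ + lilScale n₂)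
        ≤ (n₂ : ℝ) - n₁) :
    ¬ SimplyStronglyNormal b ξ := by
  intro hξ
  obtain ⟨N, hN⟩ := eventually_atTop.1 (hξ.eventually_abs_digCount_sub_lt hk)
  obtain ⟨n₁, n₂, h₁, h₂, hdeficit⟩ := h N
  have hb : (0 : ℝ) < b := by exact_mod_cast k.zero_le.trans_lt hk
  have e₁ := abs_lt.1 (hN n₁ h₁)
  have e₂ := abs_lt.1 (hN n₂ h₂)
  have key : ((n₂ : ℝ) - n₁) / b
      < ((digCount b ξ k n₂ : ℝ) - digCount b ξ k n₁) + (lilScale n₁ + lilScale n₂) := by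
    rw [sub_div]
    linarith
  rw [div_lt_iff₀ hb] at key
  linarith

section DigitStatistics

variable {b : ℕ}

lemma card_filter_div_mod_eq_le {P : ℕ} (hP : 0 < P) (hb : 0 < b) (d m₀ m₁ : ℕ) :
    #{a ∈ Ico (m₀ * (P * b)) (m₁ * (P * b)) | a / P % b = d} ≤ (m₁ - m₀) * P := by
  have hPb : 0 < P * b := Nat.mul_pos hP hb
  have hdecomp (a : ℕ) (ha : a / P % b = d) : a = P * (b * (a / (P * b)) + d) + a % P := by
    rw [← ha, ← Nat.div_div_eq_div_mul, Nat.div_add_mod, Nat.div_add_mod]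
  calc #{a ∈ Ico (m₀ * (P * b)) (m₁ * (P * b)) | a / P % b = d}
      ≤ #(Ico m₀ m₁ ×ˢ range P) := by
        refine card_le_card_of_injOn (fun a => (a / (P * b), a % P)) (fun a ha => ?_)
          (fun a ha a' ha' h => ?_)
        · simp only [coe_filter, mem_Ico, Set.mem_ofPred_eq] at ha
          simp only [coe_product, coe_Ico, coe_range, Set.mem_prod, Set.mem_Ico, Set.mem_Iio]
          exact ⟨⟨(Nat.le_div_iff_mul_le hPb).2 ha.1.1, (Nat.div_lt_iff_lt_mul hPb).2 ha.1.2⟩,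
            Nat.mod_lt _ hP⟩
        · simp only [coe_filter, Set.mem_ofPred_eq, Prod.mk.injEq] at ha ha' h
          rw [hdecomp a ha.2, hdecomp a' ha'.2, h.1, h.2]
    _ = (m₁ - m₀) * P := by rw [card_product, Nat.card_Ico, card_range]

lemma count_digits_eq_card (hb : 2 ≤ b) (a k : ℕ) :
    (Nat.digits b a).count k = #{j ∈ range (lenb b a) | a / b ^ j % b = k} := by
  rw [List.count_eq_card_filter_range_getD _ k 0, lenb]
  simp only [Nat.getD_digits _ _ hb]

lemma lenb_eq_of_mem_Ico (hb : 2 ≤ b) {K a : ℕ} (ha : a ∈ Ico (b ^ K) (2 * b ^ K)) :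
    lenb b a = K + 1 := by
  rw [mem_Ico] at ha
  have hK : 2 * b ^ K ≤ b ^ (K + 1) := by rw [pow_succ']; exact Nat.mul_le_mul_right _ hb
  rw [lenb, Nat.length_digits _ _ (by omega) ((pow_pos (by omega) K).trans_le ha.1).ne',
    Nat.log_eq_of_pow_le_of_lt_pow ha.1 (by omega)]

lemma sum_count_zero_digits_Ico_le (hb : 2 ≤ b) (K : ℕ) :
    ∑ a ∈ Ico (b ^ K) (2 * b ^ K), (Nat.digits b a).count 0 ≤ K * b ^ (K - 1) := by
  have hcount (a) (ha : a ∈ Ico (b ^ K) (2 * b ^ K)) :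
      (Nat.digits b a).count 0 = ∑ j ∈ range K, if a / b ^ j % b = 0 then 1 else 0 := by
    obtain ⟨ha₁, ha₂⟩ := mem_Ico.1 ha
    have hlead : a / b ^ K = 1 :=
      Nat.div_eq_of_lt_le (by rwa [one_mul]) (by rwa [one_add_one_eq_two])
    rw [count_digits_eq_card hb, lenb_eq_of_mem_Ico hb ha, card_filter, sum_range_succ, hlead,
      Nat.one_mod_eq_one.2 (by omega)]
    rfl
  calc ∑ a ∈ Ico (b ^ K) (2 * b ^ K), (Nat.digits b a).count 0
      = ∑ j ∈ range K, #{a ∈ Ico (b ^ K) (2 * b ^ K) | a / b ^ j % b = 0} := by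
        rw [sum_congr rfl hcount, sum_comm]
        simp only [card_filter]
    _ ≤ ∑ j ∈ range K, b ^ (K - 1) := sum_le_sum fun j hj => by
        have hj : j < K := mem_range.1 hj
        have h₁ : b ^ K = b ^ (K - 1 - j) * (b ^ j * b) := by
          rw [← pow_succ, ← pow_add]; congr 1; omega
        have h₂ : b ^ (K - 1) = (2 * b ^ (K - 1 - j) - b ^ (K - 1 - j)) * b ^ j := by
          rw [two_mul, Nat.add_sub_cancel, ← pow_add]; congr 1; omega
        rw [h₁, h₂, ← mul_assoc 2]
        exact card_filter_div_mod_eq_le (by positivity) (by omega) _ _ _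
    _ = K * b ^ (K - 1) := by simp

end DigitStatistics

lemma pow_card_filter_prime_Ioc_le_four_pow (n : ℕ) :
    n ^ #{p ∈ Ioc n (2 * n) | p.Prime} ≤ 4 ^ n := by
  calc n ^ #{p ∈ Ioc n (2 * n) | p.Prime}
      ≤ ∏ p ∈ Ioc n (2 * n) with p.Prime, p :=
        pow_card_le_prod _ _ _ fun p hp => (mem_Ioc.1 (mem_filter.1 hp).1).1.le
    _ ≤ n.centralBinom := by
        refine Nat.le_of_dvd n.centralBinom_pos (prod_primes_dvd _
          (fun p hp => (mem_filter.1 hp).2.prime) fun p hp => ?_)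
        obtain ⟨hp, hprime⟩ := mem_filter.1 hp
        obtain ⟨hnp, hpn⟩ := mem_Ioc.1 hp
        rw [Nat.centralBinom_eq_two_mul_choose, two_mul]
        exact hprime.dvd_choose_add hnp hnp (by omega)
    _ ≤ 4 ^ n := n.centralBinom_le_four_pow

lemma not_prime_ten_pow (m : ℕ) : ¬ (10 ^ m).Prime := fun hp => by
  have h := (hp.pow_eq_iff.1 rfl).1
  rw [← h] at hp
  norm_num at hp

lemma mul_card_filter_prime_Ico_le {K : ℕ} (hK : 1 ≤ K) :
    K * #{p ∈ Ico (10 ^ K) (2 * 10 ^ K) | p.Prime} ≤ 7 * 10 ^ (K - 1) := by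
  have hsub : {p ∈ Ico (10 ^ K) (2 * 10 ^ K) | p.Prime}
      ⊆ {p ∈ Ioc (10 ^ K) (2 * 10 ^ K) | p.Prime} := by
    intro p hp
    simp only [mem_filter, mem_Ico, mem_Ioc] at hp ⊢
    exact ⟨⟨hp.1.1.lt_of_ne fun h => not_prime_ten_pow K (h ▸ hp.2), hp.1.2.le⟩, hp.2⟩
  set π := #{p ∈ Ico (10 ^ K) (2 * 10 ^ K) | p.Prime}
  set π' := #{p ∈ Ioc (10 ^ K) (2 * 10 ^ K) | p.Prime}
  have h : (10 : ℕ) ^ (K * π) ≤ 10 ^ (7 * 10 ^ (K - 1)) :=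
    calc (10 : ℕ) ^ (K * π) = (10 ^ K) ^ π := by rw [pow_mul]
    _ ≤ (10 ^ K) ^ π' := Nat.pow_le_pow_right (by positivity) (card_le_card hsub)
    _ ≤ 4 ^ 10 ^ K := pow_card_filter_prime_Ioc_le_four_pow (10 ^ K)
    _ = (4 ^ 10) ^ 10 ^ (K - 1) := by rw [← pow_mul, ← pow_succ']; congr 2; omega
    _ ≤ (10 ^ 7) ^ 10 ^ (K - 1) := Nat.pow_le_pow_left (by norm_num) _
    _ = 10 ^ (7 * 10 ^ (K - 1)) := by rw [pow_mul]
  exact (Nat.pow_le_pow_iff_right (by norm_num)).1 h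

section Composites

def composites : Set ℕ := {n | 2 ≤ n ∧ ¬ n.Prime}

instance : DecidablePred (· ∈ composites) := fun n =>
  inferInstanceAs (Decidable (2 ≤ n ∧ ¬ n.Prime))

lemma exists_mem_composites_ten_dvd (N : ℕ) : ∃ a ∈ composites, N ≤ a ∧ 10 ∣ a :=
  ⟨10 * (N + 2), show 2 ≤ _ ∧ _ from ⟨by omega, Nat.not_prime_mul (by omega) (by omega)⟩,
    by omega, dvd_mul_right _ _⟩

lemma ten_pow_mem_composites {m : ℕ} (hm : 1 ≤ m) : 10 ^ m ∈ composites :=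
  ⟨Nat.one_lt_pow (by omega) (by norm_num), not_prime_ten_pow m⟩

lemma ten_mul_sum_count_zero_composites_Ico_add_le {K : ℕ} (hK : 7 ≤ K) :
    10 * ∑ a ∈ Ico (10 ^ K) (2 * 10 ^ K) with a ∈ composites, (Nat.digits 10 a).count 0
        + 2 * 10 ^ (K - 1)
      ≤ ∑ a ∈ Ico (10 ^ K) (2 * 10 ^ K) with a ∈ composites, lenb 10 a := by
  set I := Ico (10 ^ K) (2 * 10 ^ K)
  set π := #{p ∈ I | p.Prime}
  have hzeros : ∑ a ∈ I with a ∈ composites, (Nat.digits 10 a).count 0 ≤ K * 10 ^ (K - 1) :=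
    (sum_le_sum_of_subset (filter_subset _ _)).trans (sum_count_zero_digits_Ico_le (by norm_num) K)
  have hlen : ∑ a ∈ I with a ∈ composites, lenb 10 a = (K + 1) * #{a ∈ I | a ∈ composites} := by
    rw [sum_congr rfl fun a ha => lenb_eq_of_mem_Ico (by norm_num) (mem_filter.1 ha).1, sum_const,
      smul_eq_mul, mul_comm]
  have hcard : #{a ∈ I | a ∈ composites} + π = 10 * 10 ^ (K - 1) := by
    have hcomp : {a ∈ I | a ∈ composites} = {a ∈ I | ¬ a.Prime} := filter_congr fun a ha => by
      have : 2 ≤ a := (Nat.one_lt_pow (by omega) (by norm_num)).trans_le (mem_Ico.1 ha).1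
      simp [composites, this]
    have hpow : 10 ^ K = 10 * 10 ^ (K - 1) := by rw [← pow_succ']; congr 1; omega
    rw [hcomp, add_comm, card_filter_add_card_filter_not, Nat.card_Ico]
    omega
  have hπ := mul_card_filter_prime_Ico_le (K := K) (by omega)
  have hπ' : 7 * π ≤ K * π := Nat.mul_le_mul_right _ hK
  have hKcard := congrArg (K * ·) hcard
  simp only [mul_add] at hKcard
  rw [hlen, add_mul, one_mul]
  linarith

lemma sum_lenb_composites_le (K : ℕ) :
    ∑ a ∈ range (2 * 10 ^ K) with a ∈ composites, lenb 10 a ≤ 2 * (K + 1) * 10 ^ K := by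
  have hK : 2 * 10 ^ K ≤ 10 ^ (K + 1) := by rw [pow_succ']; omega
  calc ∑ a ∈ range (2 * 10 ^ K) with a ∈ composites, lenb 10 a
      ≤ #{a ∈ range (2 * 10 ^ K) | a ∈ composites} • (K + 1) :=
        sum_le_card_nsmul _ _ _ fun a ha => (Nat.digits_length_le_iff (by norm_num) a).2 <|
          (mem_range.1 (mem_filter.1 ha).1).trans_le hK
    _ ≤ #(range (2 * 10 ^ K)) • (K + 1) := by gcongr; exact filter_subset _ _
    _ = 2 * (K + 1) * 10 ^ K := by rw [card_range, smul_eq_mul]; ring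

lemma composites_frequently_deficient (N : ℕ) :
    ∃ n₁ n₂, N ≤ n₁ ∧ N ≤ n₂ ∧
      (10 : ℝ) * ((digCount 10 (xiReal 10 1 composites) 0 n₂ : ℝ)
          - digCount 10 (xiReal 10 1 composites) 0 n₁)
        + 10 * (lilScale n₁ + lilScale n₂) ≤ (n₂ : ℝ) - n₁ := by
  set K := N + 15
  have hsplit (f : ℕ → ℕ) : ∑ a ∈ range (2 * 10 ^ K) with a ∈ composites, f a
      = ∑ a ∈ range (10 ^ K) with a ∈ composites, f a
        + ∑ a ∈ Ico (10 ^ K) (2 * 10 ^ K) with a ∈ composites, f a := by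
    simp only [sum_filter]
    exact (sum_range_add_sum_Ico _ (by omega)).symm
  have hN : N ≤ ∑ a ∈ range (10 ^ K) with a ∈ composites, lenb 10 a :=
    calc N ≤ K - 1 + 1 := by omega
      _ = lenb 10 (10 ^ (K - 1)) :=
        (lenb_eq_of_mem_Ico (by norm_num) (left_mem_Ico.2 (lt_two_mul_self (by positivity)))).symm
      _ ≤ _ := single_le_sum (fun _ _ => Nat.zero_le _) <| mem_filter.2
          ⟨mem_range.2 (Nat.pow_lt_pow_right (by norm_num) (by omega)),
            ten_pow_mem_composites (by omega)⟩
  have hle := sum_lenb_composites_le K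
  refine ⟨_, _, hN, hN.trans (hsplit _ ▸ Nat.le_add_right _ _), ?_⟩
  have hdeficit := ten_mul_sum_count_zero_composites_Ico_add_le (K := K) (by omega)
  have hE₁ := ten_mul_lilScale_le (K := K) (by omega) ((hsplit _ ▸ Nat.le_add_right _ _).trans hle)
  have hE₂ := ten_mul_lilScale_le (K := K) (by omega) hle
  have h0 : 0 ∉ composites := fun h => absurd h.1 (by norm_num)
  rw [digCount_xiReal_sum_lenb (by norm_num) exists_mem_composites_ten_dvd h0,
    digCount_xiReal_sum_lenb (by norm_num) exists_mem_composites_ten_dvd h0, hsplit, hsplit]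
  rw [hsplit] at hE₂
  push_cast
  have := (Nat.cast_le (α := ℝ)).2 hdeficit
  push_cast at this
  linarith

end Composites

/-- **Corollary.** The number `0.46891012141516182021222425…`, obtained by concatenating
the decimal digits of the composite positive integers, is not simply strongly normal
(hence not strongly normal) to the base `10`. -/
theorem composite_concatenation_not_stronglyNormal :
    ¬ SimplyStronglyNormal 10 (xiReal 10 1 {n : ℕ | 2 ≤ n ∧ ¬ n.Prime}) ∧
      ¬ StronglyNormal 10 (xiReal 10 1 {n : ℕ | 2 ≤ n ∧ ¬ n.Prime}) := by
  have h : ¬ SimplyStronglyNormal 10 (xiReal 10 1 composites) :=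
    not_simplyStronglyNormal_of_frequently_deficient (k := 0) (by norm_num) fun N => by
      simpa using composites_frequently_deficient N
  exact ⟨h, fun hsn => h (pow_one 10 ▸ hsn 1 le_rfl)⟩
end

section
/- Let c ≥ 1 be a real number and b ≥ 2, k ≥ 1 integers. Let d_{b,c,k} denote the total number of base-b digits in the concatenation, for n = 1, 2, ..., 2b^{k-1} - 1, of the base-b digit string of n repeated ⌊c^{ℓ_b(n)}⌋ times, where ℓ_b(n) is the number of base-b digits of n. Then d_{b,c,k} = ⌊c^k⌋·k·b^{k-1} + Σ_{n=1}^{k-1} ⌊c^n⌋·n·b^{n-1}·(b-1). -/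
open Filter

/-! The numbers with exactly `m` base-`b` digits form the interval `[b^(m-1), b^m)`, of length
`b^(m-1) (b-1)`, on which the summand `⌊c^ℓ_b(n)⌋ ℓ_b(n)` is constant. The range
`1, …, 2 b^(k-1) - 1` consists of all numbers with fewer than `k` digits followed by the first
`b^(k-1)` numbers with exactly `k` digits. -/

lemma lenb_eq_of_pow_le_of_lt_pow {b m n : ℕ} (hb : 2 ≤ b) (h₁ : b ^ m ≤ n)
    (h₂ : n < b ^ (m + 1)) : lenb b n = m + 1 := by
  have hn : n ≠ 0 := (Nat.pow_pos (by omega)).trans_le h₁ |>.ne'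
  rw [lenb, Nat.length_digits b n hb hn, Nat.log_eq_of_pow_le_of_lt_pow h₁ h₂]

lemma sum_Ico_comp_lenb_of_le {b m N : ℕ} (hb : 2 ≤ b) (hN : N ≤ b ^ (m + 1)) (f : ℕ → ℕ) :
    ∑ n ∈ Finset.Ico (b ^ m) N, f (lenb b n) = (N - b ^ m) * f (m + 1) := by
  have h_const : ∀ n ∈ Finset.Ico (b ^ m) N, f (lenb b n) = f (m + 1) := by
    intro n hn
    obtain ⟨h₁, h₂⟩ := Finset.mem_Ico.1 hn
    rw [lenb_eq_of_pow_le_of_lt_pow hb h₁ (h₂.trans_le hN)]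
  rw [Finset.sum_congr rfl h_const, Finset.sum_const, Nat.card_Ico, smul_eq_mul]

lemma sum_Ico_one_pow_comp_lenb {b : ℕ} (hb : 2 ≤ b) (f : ℕ → ℕ) (K : ℕ) :
    ∑ n ∈ Finset.Ico 1 (b ^ K), f (lenb b n) =
      ∑ m ∈ Finset.Icc 1 K, f m * b ^ (m - 1) * (b - 1) := by
  induction K with
  | zero => simp
  | succ K ih =>
    have h_one_le : 1 ≤ b ^ K := Nat.one_le_pow _ _ (by omega)
    have h_mono : b ^ K ≤ b ^ (K + 1) := Nat.pow_le_pow_right (by omega) K.le_succ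
    have h_diff : b ^ (K + 1) - b ^ K = b ^ K * (b - 1) := by rw [pow_succ, Nat.mul_sub_one]
    rw [← Finset.sum_Ico_consecutive _ h_one_le h_mono, ih, sum_Ico_comp_lenb_of_le hb le_rfl,
      Finset.sum_Icc_succ_top (by omega), h_diff, Nat.add_sub_cancel]
    ring

theorem dTotal_eq_formula_general (b k : ℕ) (hb : 2 ≤ b) (hk : 1 ≤ k) (c : ℝ) :
    dTotal b c k =
      ⌊c ^ k⌋₊ * k * b ^ (k - 1) +
        ∑ n ∈ Finset.Icc 1 (k - 1), ⌊c ^ n⌋₊ * n * b ^ (n - 1) * (b - 1) := by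
  obtain ⟨j, rfl⟩ := Nat.exists_eq_add_of_le' hk
  have h_one_le : 1 ≤ b ^ j := Nat.one_le_pow _ _ (by omega)
  have h_two_mul : 2 * b ^ j ≤ b ^ (j + 1) := by
    rw [pow_succ']; exact Nat.mul_le_mul_right _ hb
  have h_Icc : Finset.Icc 1 (2 * b ^ j - 1) = Finset.Ico 1 (2 * b ^ j) := by
    rw [← Finset.Ico_add_one_right_eq_Icc, Nat.sub_add_cancel (by omega)]
  rw [dTotal, Nat.add_sub_cancel, h_Icc,
    ← Finset.sum_Ico_consecutive _ h_one_le (by omega : b ^ j ≤ 2 * b ^ j),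
    sum_Ico_one_pow_comp_lenb hb (fun m => ⌊c ^ m⌋₊ * m),
    sum_Ico_comp_lenb_of_le hb h_two_mul (fun m => ⌊c ^ m⌋₊ * m),
    show 2 * b ^ j - b ^ j = b ^ j by omega]
  ring

/-- **Lemma 2.1, first assertion.** The closed formula for `d_{b,c,k}`. -/
theorem dTotal_eq_formula (b k : ℕ) (hb : 2 ≤ b) (hk : 1 ≤ k) (c : ℝ) (hc : 1 ≤ c) :
    dTotal b c k =
      ⌊c ^ k⌋₊ * k * b ^ (k - 1) +
        ∑ n ∈ Finset.Icc 1 (k - 1), ⌊c ^ n⌋₊ * n * b ^ (n - 1) * (b - 1) :=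
  dTotal_eq_formula_general b k hb hk c
end

section
/- Let c ≥ 1 be a real number and b ≥ 2 an integer, and for integers k ≥ 1 let d_{b,c,k} = ⌊c^k⌋·k·b^{k-1} + Σ_{n=1}^{k-1} ⌊c^n⌋·n·b^{n-1}·(b-1). Then there exists a constant C > 0 such that for all k ≥ 1, |d_{b,c,k} - ((cb + b - 2)/(b(cb-1)))·k·(cb)^k| ≤ C·(cb)^k. -/
/-!
Replacing `⌊c ^ n⌋` by `c ^ n` turns `d_{b,c,k}` into an arithmetico-geometric sum in `x = cb`,
equal to the main term `(cb + b - 2) / (b (cb - 1)) · k · x ^ k` minus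
`(b - 1) / b · (x ^ (k + 1) - x) / (x - 1) ^ 2 = O(x ^ k)`. The floor errors vanish for `c = 1`;
for `c > 1` they lie in `[0, 1)`, so they add at most `d_{b,1,k} ≤ 2 k b ^ (k - 1)`, which is
`O((cb) ^ k)` since `k ≤ c ^ k / (c - 1)`.
-/

open Filter

open Finset

/-- `d_{b,c,k}` with the repetition counts `⌊c ^ n⌋` replaced by arbitrary real weights `f n`. -/
noncomputable def dWeighted (b : ℕ) (f : ℕ → ℝ) (k : ℕ) : ℝ :=
  f k * k * b ^ (k - 1) + ∑ n ∈ Icc 1 (k - 1), f n * n * b ^ (n - 1) * (b - 1)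

section dWeighted

variable {b : ℕ}

theorem dFormula_eq_dWeighted (hb : 1 ≤ b) (c : ℝ) (k : ℕ) :
    (dFormula b c k : ℝ) = dWeighted b (fun n => ⌊c ^ n⌋₊) k := by
  simp only [dFormula, dWeighted]
  push_cast [Nat.cast_sub hb]
  rfl

theorem dWeighted_sub (f g : ℕ → ℝ) (k : ℕ) :
    dWeighted b f k - dWeighted b g k = dWeighted b (f - g) k := by
  simp only [dWeighted, Pi.sub_apply, sub_mul, sum_sub_distrib]
  ring

theorem abs_dWeighted_le (hb : 1 ≤ b) {f g : ℕ → ℝ} (hfg : ∀ n, |f n| ≤ g n) (k : ℕ) :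
    |dWeighted b f k| ≤ dWeighted b g k := by
  have hb' : (0 : ℝ) ≤ b - 1 := sub_nonneg.mpr (Nat.one_le_cast.mpr hb)
  refine (abs_add_le _ _).trans (add_le_add ?_ ((abs_sum_le_sum_abs _ _).trans ?_))
  · rw [abs_mul, abs_mul, abs_of_nonneg (by positivity : (0 : ℝ) ≤ k),
      abs_of_nonneg (by positivity : (0 : ℝ) ≤ (b : ℝ) ^ (k - 1))]
    gcongr
    exact hfg k
  · refine sum_le_sum fun n _ => ?_
    rw [abs_mul, abs_mul, abs_mul, abs_of_nonneg (by positivity : (0 : ℝ) ≤ n),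
      abs_of_nonneg (by positivity : (0 : ℝ) ≤ (b : ℝ) ^ (n - 1)), abs_of_nonneg hb']
    gcongr
    exact hfg n

theorem dWeighted_succ (f : ℕ → ℝ) {k : ℕ} (hk : 1 ≤ k) :
    dWeighted b f (k + 1) =
      dWeighted b f k + f (k + 1) * (k + 1) * b ^ k + f k * k * b ^ (k - 1) * (b - 2) := by
  obtain ⟨j, rfl⟩ := Nat.exists_eq_add_of_le' hk
  simp only [dWeighted, Nat.add_sub_cancel, sum_Icc_succ_top (Nat.le_add_left 1 j)]
  push_cast
  ring

theorem dWeighted_pow (hb : b ≠ 0) {c : ℝ} (hcb : c * b ≠ 1) {k : ℕ} (hk : 1 ≤ k) :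
    dWeighted b (c ^ ·) k = (c * b + b - 2) / (b * (c * b - 1)) * k * (c * b) ^ k
      - (b - 1) / b * ((c * b) ^ (k + 1) - c * b) / (c * b - 1) ^ 2 := by
  have hb' : (b : ℝ) ≠ 0 := Nat.cast_ne_zero.mpr hb
  have hcb' : c * b - 1 ≠ 0 := sub_ne_zero.mpr hcb
  induction k, hk using Nat.le_induction with
  | base =>
    simp only [dWeighted, pow_one, Nat.cast_one, mul_one, tsub_self, pow_zero, Order.lt_one_iff,
      Icc_eq_empty_of_lt, sum_empty, add_zero, Nat.reduceAdd]
    field_simp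
    ring
  | succ k hk ih =>
    obtain ⟨j, rfl⟩ := Nat.exists_eq_add_of_le' hk
    rw [dWeighted_succ _ hk, ih]
    push_cast
    field_simp
    ring

end dWeighted

section asymptotics

variable {b : ℕ} {c : ℝ}

theorem abs_dWeighted_pow_sub_le (hb : 1 ≤ b) (hcb : 1 < c * b) {k : ℕ} (hk : 1 ≤ k) :
    |dWeighted b (c ^ ·) k - (c * b + b - 2) / (b * (c * b - 1)) * k * (c * b) ^ k|
      ≤ c * b / (c * b - 1) ^ 2 * (c * b) ^ k := by
  have hb' : (1 : ℝ) ≤ b := Nat.one_le_cast.mpr hb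
  have hpow : c * b ≤ (c * b) ^ (k + 1) := le_self_pow₀ hcb.le (by omega)
  have hcoef : ((b : ℝ) - 1) / b ≤ 1 := div_le_one_of_le₀ (by linarith) (by positivity)
  rw [dWeighted_pow (by omega) hcb.ne' hk, sub_sub_cancel_left, abs_neg,
    abs_of_nonneg (by have := sub_nonneg.mpr hpow; positivity)]
  calc ((b : ℝ) - 1) / b * ((c * b) ^ (k + 1) - c * b) / (c * b - 1) ^ 2
      ≤ 1 * (c * b) ^ (k + 1) / (c * b - 1) ^ 2 := by
        gcongr
        linarith
    _ = c * b / (c * b - 1) ^ 2 * (c * b) ^ k := by ring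

theorem dWeighted_one_le (hb : 2 ≤ b) {k : ℕ} (hk : 1 ≤ k) :
    dWeighted b 1 k ≤ 2 / b * k * b ^ k := by
  have hb' : (2 : ℝ) ≤ b := by exact_mod_cast hb
  have hb1 : (b : ℝ) - 1 ≠ 0 := by linarith
  have hpow : (b : ℝ) ≤ b ^ (k + 1) := le_self_pow₀ (by linarith) (by omega)
  -- the constant weights `1 = 1 ^ n` are the case `c = 1` of the closed form
  have h := dWeighted_pow (b := b) (c := 1) (by omega) (by linarith) hk
  simp only [one_pow, one_mul] at h
  have hA : ((b : ℝ) + b - 2) / (b * (b - 1)) = 2 / b := by field_simp; ring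
  have hR : 0 ≤ ((b : ℝ) - 1) / b * ((b : ℝ) ^ (k + 1) - b) / (b - 1) ^ 2 := by
    have := sub_nonneg.mpr hpow
    have : (0 : ℝ) ≤ b - 1 := by linarith
    positivity
  change dWeighted b (fun _ => 1) k ≤ _
  rw [h, hA]
  linarith

theorem exists_abs_dFormula_sub_dWeighted_le (hb : 2 ≤ b) (hc : 1 ≤ c) :
    ∃ C, 0 ≤ C ∧ ∀ k, 1 ≤ k →
      |(dFormula b c k : ℝ) - dWeighted b (c ^ ·) k| ≤ C * (c * b) ^ k := by
  simp_rw [dFormula_eq_dWeighted (by omega : 1 ≤ b), dWeighted_sub]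
  rcases hc.eq_or_lt with rfl | hc
  · refine ⟨0, le_rfl, fun k _ => ?_⟩
    simp [dWeighted]
  · have hc' : 0 < c - 1 := sub_pos.mpr hc
    refine ⟨2 / (b * (c - 1)), by positivity, fun k hk => ?_⟩
    have hfloor (n : ℕ) : |(⌊c ^ n⌋₊ : ℝ) - c ^ n| ≤ 1 := by
      have h0 : 0 ≤ c ^ n := by positivity
      rw [abs_sub_comm, abs_of_nonneg (sub_nonneg.mpr (Nat.floor_le h0))]
      linarith [Nat.lt_floor_add_one (c ^ n)]
    have hbernoulli : (k : ℝ) * (c - 1) ≤ c ^ k := by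
      have := one_add_mul_le_pow (by linarith : (-2 : ℝ) ≤ c - 1) k
      rw [add_sub_cancel] at this
      linarith
    calc _ ≤ dWeighted b 1 k := abs_dWeighted_le (by omega) hfloor k
      _ ≤ 2 / b * k * b ^ k := dWeighted_one_le hb hk
      _ = 2 / (b * (c - 1)) * (k * (c - 1)) * b ^ k := by field_simp
      _ ≤ 2 / (b * (c - 1)) * c ^ k * b ^ k := by gcongr
      _ = 2 / (b * (c - 1)) * (c * b) ^ k := by ring

end asymptotics

/-- **Lemma 2.1, second assertion.** Asymptotics of `d_{b,c,k}`:
`d_{b,c,k} = ((cb + b - 2)/(b(cb-1)))·k·(cb)^k·(1 + O(1/k))`. -/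
theorem dFormula_asymptotics (b : ℕ) (hb : 2 ≤ b) (c : ℝ) (hc : 1 ≤ c) :
    ∃ C : ℝ, 0 < C ∧ ∀ k : ℕ, 1 ≤ k →
      |(dFormula b c k : ℝ) -
          (c * b + b - 2) / (b * (c * b - 1)) * k * (c * b) ^ k| ≤ C * (c * b) ^ k := by
  have hcb : 1 < c * b := by
    have : (2 : ℝ) ≤ b := by exact_mod_cast hb
    nlinarith
  obtain ⟨C, hC, hfloor⟩ := exists_abs_dFormula_sub_dWeighted_le hb hc
  refine ⟨C + c * b / (c * b - 1) ^ 2, by positivity, fun k hk => ?_⟩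
  calc _ ≤ |(dFormula b c k : ℝ) - dWeighted b (c ^ ·) k|
        + |dWeighted b (c ^ ·) k - (c * b + b - 2) / (b * (c * b - 1)) * k * (c * b) ^ k| :=
        abs_sub_le _ _ _
    _ ≤ C * (c * b) ^ k + c * b / (c * b - 1) ^ 2 * (c * b) ^ k :=
        add_le_add (hfloor k hk) (abs_dWeighted_pow_sub_le (by omega) hcb hk)
    _ = _ := by ring
end

section
/- Let c ≥ 1 be a real number, b ≥ 2 an integer, A ⊆ ℕ a set of positive integers, and d_{b,c,k} the total number of base-b digits in the concatenation, for n = 1, ..., 2b^{k-1} − 1, of the base-b digit string of n repeated ⌊c^{ℓ_b(n)}⌋ times. Suppose there is a positive constant r such that for all sufficiently large k, m_{1,b}(ξ_{ℕ∖A,b,c}; d_{b,c,k}) − d_{b,c,k}/b ≥ r·(cb)^k. Then ξ_{ℕ∖A,b,c} is not simply strongly normal to the base b; in particular, it is not strongly normal to the base b. -/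
open Filter

/-!
The excess of ones at position `d_k := d_{b,c,k}` is at least `r (cb)^k`, while `d_k ≤ 2k (cb)^k`,
so the law-of-the-iterated-logarithm scale `√(2 d_k log log d_k)` is only `O(k (cb)^{k/2})`.
Hence the normalised excess of ones is unbounded along `d_k`, and its limsup is not the finite
value `√(b-1)/b` that simple strong normality prescribes.
-/

section DigitCount

theorem le_dTotal {b : ℕ} (hb : 2 ≤ b) {c : ℝ} (hc : 1 ≤ c) (k : ℕ) : k ≤ dTotal b c k := by
  have hterm : ∀ n ∈ Finset.Icc 1 (2 * b ^ (k - 1) - 1), 1 ≤ ⌊c ^ lenb b n⌋₊ * lenb b n := by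
    intro n hn
    have hn0 : n ≠ 0 := Nat.one_le_iff_ne_zero.1 (Finset.mem_Icc.1 hn).1
    have hlen : 0 < lenb b n := List.length_pos_iff.2 (Nat.digits_ne_nil_iff_ne_zero.2 hn0)
    have hfloor : 0 < ⌊c ^ lenb b n⌋₊ := Nat.floor_pos.2 (one_le_pow₀ hc)
    exact Nat.mul_pos hfloor hlen
  have hk : k ≤ 2 * b ^ (k - 1) - 1 := by
    have : k - 1 < b ^ (k - 1) := Nat.lt_pow_self hb
    omega
  calc k ≤ (Finset.Icc 1 (2 * b ^ (k - 1) - 1)).card := by simpa using hk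
    _ = (Finset.Icc 1 (2 * b ^ (k - 1) - 1)).card • 1 := by rw [smul_eq_mul, mul_one]
    _ ≤ dTotal b c k := Finset.card_nsmul_le_sum _ _ 1 hterm

theorem tendsto_dTotal_atTop {b : ℕ} (hb : 2 ≤ b) {c : ℝ} (hc : 1 ≤ c) :
    Tendsto (dTotal b c) atTop atTop :=
  tendsto_atTop_mono (le_dTotal hb hc) tendsto_id

theorem dTotal_le {b : ℕ} (hb : 2 ≤ b) {c : ℝ} (hc : 1 ≤ c) {k : ℕ} (hk : 1 ≤ k) :
    (dTotal b c k : ℝ) ≤ 2 * k * (c * b) ^ k := by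
  have hpow : 2 * b ^ (k - 1) ≤ b ^ k := by
    calc 2 * b ^ (k - 1) ≤ b * b ^ (k - 1) := Nat.mul_le_mul_right _ hb
      _ = b ^ k := by rw [← pow_succ', Nat.sub_add_cancel hk]
  have hlen : ∀ n ∈ Finset.Icc 1 (2 * b ^ (k - 1) - 1), lenb b n ≤ k := by
    intro n hn
    rw [lenb, Nat.digits_length_le_iff hb]
    have := (Finset.mem_Icc.1 hn).2
    have : 0 < b ^ k := by positivity
    omega
  have hsum : dTotal b c k ≤ (2 * b ^ (k - 1) - 1) * (⌊c ^ k⌋₊ * k) := by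
    have := Finset.sum_le_card_nsmul _ _ (⌊c ^ k⌋₊ * k) fun n hn =>
      Nat.mul_le_mul (Nat.floor_le_floor (pow_le_pow_right₀ hc (hlen n hn))) (hlen n hn)
    simpa [dTotal] using this
  have hterms : ((2 * b ^ (k - 1) - 1 : ℕ) : ℝ) ≤ 2 * (b : ℝ) ^ k := by
    exact_mod_cast (Nat.sub_le _ _).trans (hpow.trans (Nat.le_mul_of_pos_left _ two_pos))
  calc (dTotal b c k : ℝ) ≤ ((2 * b ^ (k - 1) - 1 : ℕ) : ℝ) * (⌊c ^ k⌋₊ * k) := by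
        exact_mod_cast hsum
    _ ≤ 2 * (b : ℝ) ^ k * (c ^ k * k) := by
        gcongr
        exact Nat.floor_le (by positivity)
    _ = 2 * k * (c * b) ^ k := by ring

end DigitCount

section IteratedLogarithmScale

open Real

theorem two_mul_log_log_le {x y : ℝ} {k : ℕ} (hx : 1 ≤ x) (hy : 1 ≤ y)
    (hyk : y ≤ 2 * k * x ^ k) : 2 * y * log (log y) ≤ 4 * (2 + log x) * k ^ 2 * x ^ k := by
  have hk : (0 : ℝ) < k := by
    rcases Nat.eq_zero_or_pos k with rfl | hk
    · norm_num at hyk; linarith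
    · exact_mod_cast hk
  have hlog_y : log y ≤ (2 + log x) * k := by
    have hlog_2k : log (2 * k) ≤ 2 * k := (log_le_sub_one_of_pos (by positivity)).trans (by linarith)
    calc log y ≤ log (2 * k * x ^ k) := log_le_log (by linarith) hyk
      _ = log (2 * k) + k * log x := by
          rw [log_mul (by positivity) (by positivity), log_pow]
      _ ≤ (2 + log x) * k := by linarith
  calc 2 * y * log (log y) ≤ 2 * y * log y :=
        mul_le_mul_of_nonneg_left (log_le_self (log_nonneg hy)) (by positivity)
    _ ≤ 2 * (2 * k * x ^ k) * ((2 + log x) * k) := by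
        gcongr
        exact log_nonneg hy
    _ = 4 * (2 + log x) * k ^ 2 * x ^ k := by ring

theorem eventually_mul_sqrt_two_mul_log_log_le {x r : ℝ} (hx : 1 < x) (hr : 0 < r)
    {u : ℕ → ℝ} (hu_one : ∀ᶠ k in atTop, 1 ≤ u k) (hu_le : ∀ᶠ k in atTop, u k ≤ 2 * k * x ^ k)
    (M : ℝ) : ∀ᶠ k in atTop, M * √(2 * u k * log (log (u k))) ≤ r * x ^ k := by
  set D := 2 + log x
  have hD : 0 < D := by linarith [log_nonneg hx.le]
  have hsmall := ((isLittleO_pow_const_const_pow_of_one_lt 2 hx).const_mul_left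
    (4 * D * M ^ 2)).bound (pow_pos hr 2)
  filter_upwards [hu_one, hu_le, hsmall] with k hu1 hule hsmall_k
  have hxk : 0 < x ^ k := by positivity
  rw [norm_of_nonneg (by positivity), norm_of_nonneg hxk.le] at hsmall_k
  have hlog := two_mul_log_log_le hx.le hu1 hule
  calc M * √(2 * u k * log (log (u k))) ≤ |M| * √(2 * u k * log (log (u k))) := by
        gcongr
        exact le_abs_self M
    _ = √(M ^ 2 * (2 * u k * log (log (u k)))) := by
        rw [sqrt_mul (sq_nonneg M), sqrt_sq_eq_abs]
    _ ≤ √((r * x ^ k) ^ 2) := by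
        gcongr
        calc M ^ 2 * (2 * u k * log (log (u k))) ≤ M ^ 2 * (4 * D * k ^ 2 * x ^ k) := by gcongr
          _ = 4 * D * M ^ 2 * (k : ℝ) ^ 2 * x ^ k := by ring
          _ ≤ r ^ 2 * x ^ k * x ^ k := by gcongr
          _ = (r * x ^ k) ^ 2 := by ring
    _ = r * x ^ k := sqrt_sq (by positivity)

end IteratedLogarithmScale

section StrongNormality

theorem frequently_le_snRatio {b : ℕ} {ξ : ℝ} {j : ℕ} {x r : ℝ} (hx : 1 < x) (hr : 0 < r)
    {u : ℕ → ℕ} (hu : Tendsto u atTop atTop) (hu_le : ∀ᶠ k in atTop, (u k : ℝ) ≤ 2 * k * x ^ k)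
    (hexcess : ∀ᶠ k in atTop, r * x ^ k ≤ (digCount b ξ j (u k) : ℝ) - (u k : ℝ) / b)
    (M : ℝ) : ∃ᶠ n in atTop, M ≤ snRatio b ξ j n := by
  have hu_three : ∀ᶠ k in atTop, (3 : ℝ) ≤ u k :=
    (hu.eventually_ge_atTop 3).mono fun k hk => by exact_mod_cast hk
  have hscale_pos : ∀ᶠ k in atTop, 0 < 2 * (u k : ℝ) * Real.log (Real.log (u k)) := by
    filter_upwards [hu_three] with k hk
    have hlog : 1 < Real.log (u k) := by
      rw [Real.lt_log_iff_exp_lt (by linarith)]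
      linarith [Real.exp_one_lt_d9]
    have := Real.log_pos hlog
    positivity
  have hbound := eventually_mul_sqrt_two_mul_log_log_le hx hr
    (hu_three.mono fun k hk => by linarith) hu_le M
  refine hu.frequently (Eventually.frequently ?_)
  filter_upwards [hexcess, hbound, hscale_pos] with k hex hMk hpos
  rw [snRatio, le_div_iff₀ (Real.sqrt_pos.2 hpos)]
  linarith

theorem not_simplyStronglyNormal_of_frequently_le_snRatio {b : ℕ} {ξ : ℝ} {j : ℕ} (hj : j < b)
    (h : ∀ M : ℝ, ∃ᶠ n in atTop, M ≤ snRatio b ξ j n) : ¬ SimplyStronglyNormal b ξ := by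
  intro hξ
  set L := Real.sqrt ((b : ℝ) - 1) / b
  have hle : ((L + 1 : ℝ) : EReal) ≤ atTop.limsup fun n : ℕ => (snRatio b ξ j n : EReal) :=
    le_limsup_of_frequently_le ((h (L + 1)).mono fun n hn => EReal.coe_le_coe_iff.2 hn)
  rw [(hξ j hj).1, EReal.coe_le_coe_iff] at hle
  linarith

theorem not_stronglyNormal_of_not_simplyStronglyNormal {b : ℕ} {ξ : ℝ}
    (h : ¬ SimplyStronglyNormal b ξ) : ¬ StronglyNormal b ξ :=
  fun hξ => h (by simpa using hξ 1 le_rfl)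

end StrongNormality

theorem not_stronglyNormal_of_excess_ones_general (b : ℕ) (hb : 2 ≤ b) (c : ℝ) (hc : 1 ≤ c)
    (A : Set ℕ) (r : ℝ) (hr : 0 < r)
    (hyp : ∀ᶠ k : ℕ in Filter.atTop,
      r * (c * b) ^ k ≤
        (digCount b (xiReal b c {n : ℕ | 0 < n ∧ n ∉ A}) 1 (dTotal b c k) : ℝ)
          - (dTotal b c k : ℝ) / b) :
    ¬ SimplyStronglyNormal b (xiReal b c {n : ℕ | 0 < n ∧ n ∉ A}) ∧
      ¬ StronglyNormal b (xiReal b c {n : ℕ | 0 < n ∧ n ∉ A}) := by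
  have hcb : 1 < c * b := by
    have : (2 : ℝ) ≤ b := by exact_mod_cast hb
    nlinarith
  have hd_le : ∀ᶠ k in atTop, (dTotal b c k : ℝ) ≤ 2 * k * (c * b) ^ k :=
    eventually_atTop.2 ⟨1, fun k hk => dTotal_le hb hc hk⟩
  have hnot : ¬ SimplyStronglyNormal b (xiReal b c {n : ℕ | 0 < n ∧ n ∉ A}) :=
    not_simplyStronglyNormal_of_frequently_le_snRatio (by omega)
      (frequently_le_snRatio hcb hr (tendsto_dTotal_atTop hb hc) hd_le hyp)
  exact ⟨hnot, not_stronglyNormal_of_not_simplyStronglyNormal hnot⟩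

/-- **Lemma 2.4.** If `m_{1,b}(ξ_{ℕ∖A,b,c}; d_{b,c,k}) - d_{b,c,k}/b ≥ r·(cb)^k` for some
`r > 0` and all large `k`, then `ξ_{ℕ∖A,b,c}` is not simply strongly normal to base `b`;
in particular it is not strongly normal to base `b`. -/
theorem not_stronglyNormal_of_excess_ones (b : ℕ) (hb : 2 ≤ b) (c : ℝ) (hc : 1 ≤ c)
    (A : Set ℕ) (hA : 0 ∉ A) (r : ℝ) (hr : 0 < r)
    (hyp : ∀ᶠ k : ℕ in Filter.atTop,
      r * (c * b) ^ k ≤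
        (digCount b (xiReal b c {n : ℕ | 0 < n ∧ n ∉ A}) 1 (dTotal b c k) : ℝ)
          - (dTotal b c k : ℝ) / b) :
    ¬ SimplyStronglyNormal b (xiReal b c {n : ℕ | 0 < n ∧ n ∉ A}) ∧
      ¬ StronglyNormal b (xiReal b c {n : ℕ | 0 < n ∧ n ∉ A}) :=
  not_stronglyNormal_of_excess_ones_general b hb c hc A r hr hyp
end
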